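/- Fractional Hamilton–Jacobi–Bellman equation. Fix t₀ < t_f, dimensions n, m, a nonempty compact set U ⊆ ℝ^m, a continuous map f̃ : ℝ × ℝⁿ × ℝ^m → ℝⁿ, an integer r ≥ 1, orders v₁, …, v_r > 0, continuous functions g₁, …, g_r : ℝ × ℝⁿ × ℝ^m → ℝ, and a continuous terminal cost h : ℝⁿ → ℝ. Assume the value function V is real-valued on [t₀, t_f] × ℝⁿ, and let (x*, u*) be an optimal admissible pair from (t₀, x₀), i.e., J(t₀, x₀; x*, u*) = V(t₀, x₀). Let t ∈ [t₀, t_f) be such that: V is differentiable at (t, x*(t)); u* is right-continuous at t; and for every ω ∈ U there exists an admissible pair (x, u) from (t, x*(t)) with u right-continuous at t and u(t) = ω. Then V satisfies the fractional HJB equation at (t, x*(t)): −∂V/∂t (t, x*(t)) = min_{ω ∈ U} { Σ_{j=1}^r (1/Γ(v_j)) (t_f − t)^{v_j−1} g_j(t, x*(t), ω) + ⟨∇_x V(t, x*(t)), f̃(t, x*(t), ω)⟩ }, and moreover the optimal cost of the system is J* = V(t₀, x₀). -/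

import Mathlib

/-!
Dynamic programming along the optimal trajectory. Concatenating an admissible pair from `(t, y)`
on `[t, s]` with an arbitrary pair started from its state at time `s` gives
`V(t, y) ≤ J_t^s(x, u) + V(s, x(s))`, where `J_t^s` is the fractional running cost on `[t, s]`;
restricting the optimal pair to `[s, t_f]` shows that equality holds along `(x*, u*)`. So
`s ↦ J_t^s(x, u) + V(s, x(s))` is minimal at `s = t`, and constant for the optimal pair. By the
fundamental theorem of calculus and the chain rule its right derivative at `t` is
`L(t, y, u(t)) + ∂V/∂t + ⟨∇ₓV, f̃(t, y, u(t))⟩`, with `L` the instantaneous fractional running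
cost; this is therefore nonnegative for every control value reached by a right-continuous
control, and zero at `u*(t)`.
-/

open MeasureTheory Set

noncomputable section

/-- An **admissible pair** `(x, u)` from `(t, x₀)` for the controlled dynamics
`ẋ = f̃(τ, x, u)` on `[t, t_f]`: `u` is a measurable control taking values in the
control set `U`, and `x` is a continuous trajectory satisfying the integral form of
the dynamics, `x(τ) = x₀ + ∫_t^τ f̃(σ, x(σ), u(σ)) dσ` for all `τ ∈ [t, t_f]`. -/
structure AdmissiblePair (tf : ℝ) {n m : ℕ} (U : Set (EuclideanSpace ℝ (Fin m)))
    (ftil : ℝ → EuclideanSpace ℝ (Fin n) → EuclideanSpace ℝ (Fin m) →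
      EuclideanSpace ℝ (Fin n))
    (t : ℝ) (x0 : EuclideanSpace ℝ (Fin n)) where
  x : ℝ → EuclideanSpace ℝ (Fin n)
  u : ℝ → EuclideanSpace ℝ (Fin m)
  u_mem : ∀ τ ∈ Icc t tf, u τ ∈ U
  u_meas : Measurable ((Icc t tf).restrict u)
  x_cont : ContinuousOn x (Icc t tf)
  x_eq : ∀ τ ∈ Icc t tf, x τ = x0 + ∫ σ in t..τ, ftil σ (x σ) (u σ)

/-- The **generalized (fractional-order) performance index** of an admissible pair:
`J(t, x₀; x, u) = Σ_j (1/Γ(v_j)) ∫_t^{t_f} (t_f - τ)^(v_j - 1) g_j(τ, x(τ), u(τ)) dτ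
  + h(x(t_f))`, with kernels anchored at the fixed final time `t_f`. -/
def fracCost (tf : ℝ) {n m : ℕ} {U : Set (EuclideanSpace ℝ (Fin m))}
    {ftil : ℝ → EuclideanSpace ℝ (Fin n) → EuclideanSpace ℝ (Fin m) →
      EuclideanSpace ℝ (Fin n)}
    {r : ℕ} (v : Fin r → ℝ)
    (g : Fin r → ℝ → EuclideanSpace ℝ (Fin n) → EuclideanSpace ℝ (Fin m) → ℝ)
    (h : EuclideanSpace ℝ (Fin n) → ℝ)
    {t : ℝ} {x0 : EuclideanSpace ℝ (Fin n)} (p : AdmissiblePair tf U ftil t x0) : ℝ :=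
  (∑ j, (1 / Real.Gamma (v j)) *
      ∫ τ in t..tf, (tf - τ) ^ (v j - 1) * g j τ (p.x τ) (p.u τ)) + h (p.x tf)

/-- The **value function**: the infimum, in the extended reals, of the generalized
performance index over all admissible pairs from `(t, x₀)`. -/
def fracValue (tf : ℝ) {n m : ℕ} (U : Set (EuclideanSpace ℝ (Fin m)))
    (ftil : ℝ → EuclideanSpace ℝ (Fin n) → EuclideanSpace ℝ (Fin m) →
      EuclideanSpace ℝ (Fin n))
    {r : ℕ} (v : Fin r → ℝ)
    (g : Fin r → ℝ → EuclideanSpace ℝ (Fin n) → EuclideanSpace ℝ (Fin m) → ℝ)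
    (h : EuclideanSpace ℝ (Fin n) → ℝ)
    (t : ℝ) (x0 : EuclideanSpace ℝ (Fin n)) : EReal :=
  ⨅ p : AdmissiblePair tf U ftil t x0, ((fracCost tf v g h p : ℝ) : EReal)

open TopologicalSpace

section ControlledPath

variable {X Y E : Type*} [TopologicalSpace X] [TopologicalSpace Y] [NormedAddCommGroup E]
  {G : ℝ → X → Y → E} {x : ℝ → X} {u : ℝ → Y} {K : Set Y} {a b : ℝ}

theorem exists_bound_comp_path
    (hG : Continuous ↿G)
    (hx : ContinuousOn x (Icc a b)) (hK : IsCompact K) (huK : ∀ τ ∈ Icc a b, u τ ∈ K) :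
    ∃ C, ∀ τ ∈ Icc a b, ‖G τ (x τ) (u τ)‖ ≤ C := by
  obtain ⟨C, hC⟩ := (isCompact_Icc.prod ((isCompact_Icc.image_of_continuousOn hx).prod hK))
    |>.exists_bound_of_continuousOn hG.continuousOn
  exact ⟨C, fun τ hτ => hC (τ, x τ, u τ) ⟨hτ, mem_image_of_mem x hτ, huK τ hτ⟩⟩

theorem continuousWithinAt_comp_path
    (hG : Continuous ↿G) (hab : a < b)
    (hx : ContinuousOn x (Icc a b)) (hu : ContinuousWithinAt u (Ici a) a) :
    ContinuousWithinAt (fun τ => G τ (x τ) (u τ)) (Ici a) a := by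
  have hxa : ContinuousWithinAt x (Ici a) a := by
    simpa only [ContinuousWithinAt, nhdsWithin_Icc_eq_nhdsGE hab]
      using hx a (left_mem_Icc.2 hab.le)
  exact hG.continuousAt.comp_continuousWithinAt (continuousWithinAt_id.prodMk (hxa.prodMk hu))

variable [PseudoMetrizableSpace X] [PseudoMetrizableSpace Y] [SecondCountableTopology Y]
  [MeasurableSpace Y] [OpensMeasurableSpace Y]

theorem aestronglyMeasurable_comp_path
    (hG : Continuous ↿G)
    (hx : ContinuousOn x (Icc a b)) (hu : Measurable ((Icc a b).domRestrict u)) :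
    AEStronglyMeasurable (fun τ => G τ (x τ) (u τ)) (volume.restrict (Icc a b)) :=
  hG.comp_aestronglyMeasurable (f := fun τ => (τ, x τ, u τ)) <| aestronglyMeasurable_id.prodMk <|
    (hx.aestronglyMeasurable measurableSet_Icc).prodMk
      (aemeasurable_restrict_of_measurable_subtype measurableSet_Icc hu).aestronglyMeasurable

theorem integrableOn_comp_path
    (hG : Continuous ↿G)
    (hx : ContinuousOn x (Icc a b)) (hu : Measurable ((Icc a b).domRestrict u))
    (hK : IsCompact K) (huK : ∀ τ ∈ Icc a b, u τ ∈ K) :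
    IntegrableOn (fun τ => G τ (x τ) (u τ)) (Icc a b) := by
  obtain ⟨C, hC⟩ := exists_bound_comp_path hG hx hK huK
  exact .of_bound measure_Icc_lt_top (aestronglyMeasurable_comp_path hG hx hu) C
    ((ae_restrict_iff' measurableSet_Icc).2 (.of_forall hC))

theorem intervalIntegrable_sub_rpow {r : ℝ} (hr : -1 < r) (c a b : ℝ) :
    IntervalIntegrable (fun τ => (c - τ) ^ r) volume a b := by
  simpa using
    (intervalIntegral.intervalIntegrable_rpow' (a := c - a) (b := c - b) hr).comp_sub_left c

theorem integrableOn_sub_rpow_mul_comp_path {g : ℝ → X → Y → ℝ}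
    (hg : Continuous ↿g)
    (hx : ContinuousOn x (Icc a b)) (hu : Measurable ((Icc a b).domRestrict u))
    (hK : IsCompact K) (huK : ∀ τ ∈ Icc a b, u τ ∈ K) {r : ℝ} (hr : -1 < r) (c : ℝ) :
    IntegrableOn (fun τ => (c - τ) ^ r * g τ (x τ) (u τ)) (Icc a b) := by
  obtain ⟨C, hC⟩ := exists_bound_comp_path hg hx hK huK
  have hkernel : IntegrableOn (fun τ => (c - τ) ^ r) (Icc a b) :=
    (integrableOn_Icc_iff_integrableOn_Ioc (by simp)).2 (intervalIntegrable_sub_rpow hr c a b).1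
  exact hkernel.mul_bdd (aestronglyMeasurable_comp_path hg hx hu)
    ((ae_restrict_iff' measurableSet_Icc).2 (.of_forall hC))

end ControlledPath

theorem hasDerivWithinAt_integral_Ici {E : Type*} [NormedAddCommGroup E] [NormedSpace ℝ E]
    [CompleteSpace E] {F : ℝ → E} {a b : ℝ} (hab : a < b) (hF : IntegrableOn F (Icc a b))
    (hc : ContinuousWithinAt F (Ici a) a) :
    HasDerivWithinAt (fun s => ∫ τ in a..s, F τ) (F a) (Ici a) a :=
  intervalIntegral.integral_hasDerivWithinAt_right .refl
    ⟨Ioc a b, Ioc_mem_nhdsGT hab, (hF.mono_set Ioc_subset_Icc_self).aestronglyMeasurable⟩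
    (hc.mono Ioi_subset_Ici_self)

theorem HasDerivWithinAt.nonneg_of_forall_le {φ : ℝ → ℝ} {D t b : ℝ} (htb : t < b)
    (hD : HasDerivWithinAt φ D (Ici t) t) (h : ∀ s ∈ Ioc t b, φ t ≤ φ s) : 0 ≤ D := by
  refine ge_of_tendsto ((hasDerivWithinAt_iff_tendsto_slope' self_notMem_Ioi).1
    (hD.mono Ioi_subset_Ici_self)) ?_
  filter_upwards [Ioc_mem_nhdsGT htb] with s hs
  rw [slope_def_field]
  exact div_nonneg (sub_nonneg.2 (h s hs)) (sub_pos.2 hs.1).le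

theorem HasDerivWithinAt.eq_zero_of_forall_eq {φ : ℝ → ℝ} {D t b : ℝ} (htb : t < b)
    (hD : HasDerivWithinAt φ D (Ici t) t) (h : ∀ s ∈ Icc t b, φ s = φ t) : D = 0 :=
  (uniqueDiffOn_Icc htb t (left_mem_Icc.2 htb.le)).eq_deriv _ (hD.mono Icc_subset_Ici_self)
    ((hasDerivWithinAt_const t _ (φ t)).congr h rfl)

open RealInnerProductSpace in
theorem hasDerivWithinAt_comp_graph {E : Type*} [NormedAddCommGroup E] [InnerProductSpace ℝ E]
    [CompleteSpace E] {V : ℝ → E → ℝ} {x : ℝ → E} {x' : E} {s : Set ℝ} {t : ℝ}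
    (hV : DifferentiableAt ℝ (fun q : ℝ × E => V q.1 q.2) (t, x t))
    (hx : HasDerivWithinAt x x' s t) :
    HasDerivWithinAt (fun τ => V τ (x τ))
      (deriv (fun τ => V τ (x t)) t + ⟪gradient (V t) (x t), x'⟫) s t := by
  set L := fderiv ℝ (fun q : ℝ × E => V q.1 q.2) (t, x t)
  have htime : deriv (fun τ => V τ (x t)) t = L (1, 0) :=
    (hV.hasFDerivAt.comp_hasDerivAt (f := fun τ : ℝ => (τ, x t)) t
      ((hasDerivAt_id t).prodMk (hasDerivAt_const t (x t)))).deriv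
  have hstate : ⟪gradient (V t) (x t), x'⟫ = L (0, x') := by
    have hslice : HasFDerivAt (V t) (L.comp ((0 : E →L[ℝ] ℝ).prod (.id ℝ E))) (x t) :=
      hV.hasFDerivAt.comp (x t) ((hasFDerivAt_const t (x t)).prodMk (hasFDerivAt_id (x t)))
    rw [gradient, InnerProductSpace.toDual_symm_apply, hslice.fderiv]
    simp
  have hsplit : L (1, x') = L (1, 0) + L (0, x') := by rw [← map_add]; simp
  rw [htime, hstate, ← hsplit]
  exact hV.hasFDerivAt.comp_hasDerivWithinAt t ((hasDerivWithinAt_id t s).prodMk hx)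

section FracCost

variable {X Y : Type*} {r : ℕ} {tf : ℝ} {v : Fin r → ℝ} {g : Fin r → ℝ → X → Y → ℝ}

def fracRunningCost (tf : ℝ) (v : Fin r → ℝ) (g : Fin r → ℝ → X → Y → ℝ)
    (x : ℝ → X) (u : ℝ → Y) (a b : ℝ) : ℝ :=
  ∑ j, (1 / Real.Gamma (v j)) * ∫ τ in a..b, (tf - τ) ^ (v j - 1) * g j τ (x τ) (u τ)

def fracLagrangian (tf : ℝ) (v : Fin r → ℝ) (g : Fin r → ℝ → X → Y → ℝ)
    (t : ℝ) (y : X) (ω : Y) : ℝ :=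
  ∑ j, (1 / Real.Gamma (v j)) * (tf - t) ^ (v j - 1) * g j t y ω

@[simp]
theorem fracRunningCost_self (x : ℝ → X) (u : ℝ → Y) (a : ℝ) :
    fracRunningCost tf v g x u a a = 0 := by
  simp [fracRunningCost]

theorem fracRunningCost_add_adjacent {x : ℝ → X} {u : ℝ → Y} {a b c : ℝ}
    (hab : ∀ j, IntervalIntegrable
      (fun τ => (tf - τ) ^ (v j - 1) * g j τ (x τ) (u τ)) volume a b)
    (hbc : ∀ j, IntervalIntegrable
      (fun τ => (tf - τ) ^ (v j - 1) * g j τ (x τ) (u τ)) volume b c) :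
    fracRunningCost tf v g x u a b + fracRunningCost tf v g x u b c
      = fracRunningCost tf v g x u a c := by
  simp only [fracRunningCost, ← Finset.sum_add_distrib, ← mul_add,
    intervalIntegral.integral_add_adjacent_intervals (hab _) (hbc _)]

theorem fracRunningCost_congr {x x' : ℝ → X} {u u' : ℝ → Y} {a b : ℝ}
    (hx : EqOn x x' (uIoo a b)) (hu : EqOn u u' (uIoo a b)) :
    fracRunningCost tf v g x u a b = fracRunningCost tf v g x' u' a b := by
  refine Finset.sum_congr rfl fun j _ => congrArg _ (intervalIntegral.integral_congr_uIoo ?_)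
  intro τ hτ
  simp only [hx hτ, hu hτ]

theorem hasDerivWithinAt_fracRunningCost [TopologicalSpace X]
    [PseudoMetrizableSpace X] [TopologicalSpace Y]
    [PseudoMetrizableSpace Y] [SecondCountableTopology Y] [MeasurableSpace Y]
    [OpensMeasurableSpace Y] {K : Set Y} (hK : IsCompact K) (hv : ∀ j, 0 < v j)
    (hg : ∀ j, Continuous ↿(g j))
    {x : ℝ → X} {u : ℝ → Y} {a : ℝ} (hatf : a < tf) (hx : ContinuousOn x (Icc a tf))
    (hu : Measurable ((Icc a tf).domRestrict u)) (huK : ∀ τ ∈ Icc a tf, u τ ∈ K)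
    (hua : ContinuousWithinAt u (Ici a) a) :
    HasDerivWithinAt (fracRunningCost tf v g x u a) (fracLagrangian tf v g a (x a) (u a))
      (Ici a) a := by
  have hkernel : ∀ j, ContinuousAt (fun τ : ℝ => (tf - τ) ^ (v j - 1)) a := fun j =>
    (continuousAt_const.sub continuousAt_id).rpow_const (.inl (sub_ne_zero.2 hatf.ne'))
  have hj : ∀ j, HasDerivWithinAt
      (fun s => ∫ τ in a..s, (tf - τ) ^ (v j - 1) * g j τ (x τ) (u τ))
      ((tf - a) ^ (v j - 1) * g j a (x a) (u a)) (Ici a) a := fun j =>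
    hasDerivWithinAt_integral_Ici hatf
      (integrableOn_sub_rpow_mul_comp_path (hg j) hx hu hK huK (by linarith [hv j]) tf)
      ((hkernel j).continuousWithinAt.mul (continuousWithinAt_comp_path (hg j) hatf hx hua))
  exact (HasDerivWithinAt.fun_sum fun j _ => (hj j).const_mul (1 / Real.Gamma (v j))).congr_deriv
    (by simp only [fracLagrangian, mul_assoc])

end FracCost

section ConcatAt

variable {α : Type*} {s a b : ℝ} {f g : ℝ → α}

/-- `g` is only evaluated on `[s, ∞)`, so measurability of `g` on `[s, b]` suffices. -/
def concatAt (s : ℝ) (f g : ℝ → α) (τ : ℝ) : α :=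
  if τ < s then f τ else g (max s τ)

theorem concatAt_eqOn_Iio : EqOn (concatAt s f g) f (Iio s) := fun _ hτ => if_pos hτ

theorem concatAt_eqOn_Ici : EqOn (concatAt s f g) g (Ici s) := fun τ hτ => by
  simp only [concatAt, if_neg (not_lt.2 (mem_Ici.1 hτ)), max_eq_right (mem_Ici.1 hτ)]

theorem concatAt_mem {K : Set α} (hsb : s ≤ b) (hf : ∀ τ ∈ Icc a b, f τ ∈ K)
    (hg : ∀ τ ∈ Icc s b, g τ ∈ K) : ∀ τ ∈ Icc a b, concatAt s f g τ ∈ K := fun τ hτ => by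
  unfold concatAt
  split_ifs
  · exact hf τ hτ
  · exact hg _ ⟨le_max_left _ _, max_le hsb hτ.2⟩

theorem concatAt_eqOn_Iic (hfg : f s = g s) :
    EqOn (concatAt s f g) f (Iic s) := fun τ hτ =>
  (mem_Iic.1 hτ).lt_or_eq.elim (fun hlt => concatAt_eqOn_Iio hlt) fun heq => by
    rw [heq, concatAt_eqOn_Ici (mem_Ici.2 le_rfl), hfg]

theorem measurable_domRestrict_concatAt [MeasurableSpace α] (hsb : s ≤ b)
    (hf : Measurable ((Icc a b).domRestrict f)) (hg : Measurable ((Icc s b).domRestrict g)) :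
    Measurable ((Icc a b).domRestrict (concatAt s f g)) := by
  have hmax : Measurable fun τ : Icc a b =>
      (⟨max s τ, le_max_left _ _, max_le hsb τ.2.2⟩ : Icc s b) :=
    (continuous_const.max continuous_subtype_val).subtype_mk _ |>.measurable
  exact Measurable.ite (measurable_subtype_coe measurableSet_Iio) hf (hg.comp hmax)

theorem continuousOn_concatAt [TopologicalSpace α] (has : a ≤ s) (hsb : s ≤ b)
    (hf : ContinuousOn f (Icc a s)) (hg : ContinuousOn g (Icc s b)) (hfg : f s = g s) :
    ContinuousOn (concatAt s f g) (Icc a b) := by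
  rw [← Icc_union_Icc_eq_Icc has hsb]
  exact (hf.congr ((concatAt_eqOn_Iic hfg).mono Icc_subset_Iic_self)).union_of_isClosed
    (hg.congr (concatAt_eqOn_Ici.mono Icc_subset_Ici_self)) isClosed_Icc isClosed_Icc

end ConcatAt

namespace AdmissiblePair

variable {tf : ℝ} {n m : ℕ} {U : Set (EuclideanSpace ℝ (Fin m))}
  {ftil : ℝ → EuclideanSpace ℝ (Fin n) → EuclideanSpace ℝ (Fin m) → EuclideanSpace ℝ (Fin n)}
  {t : ℝ} {x0 : EuclideanSpace ℝ (Fin n)}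
  {r : ℕ} {v : Fin r → ℝ}
  {g : Fin r → ℝ → EuclideanSpace ℝ (Fin n) → EuclideanSpace ℝ (Fin m) → ℝ}
  {h : EuclideanSpace ℝ (Fin n) → ℝ}

theorem fracCost_eq_fracRunningCost_add (p : AdmissiblePair tf U ftil t x0) :
    fracCost tf v g h p = fracRunningCost tf v g p.x p.u t tf + h (p.x tf) := rfl

theorem x_start (p : AdmissiblePair tf U ftil t x0) (htf : t ≤ tf) : p.x t = x0 := by
  simpa using p.x_eq t (left_mem_Icc.2 htf)

theorem intervalIntegrable_comp {E : Type*} [NormedAddCommGroup E]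
    {G : ℝ → EuclideanSpace ℝ (Fin n) → EuclideanSpace ℝ (Fin m) → E}
    (hG : Continuous ↿G) (hU : IsCompact U) (p : AdmissiblePair tf U ftil t x0) {a b : ℝ}
    (ha : a ∈ Icc t tf) (hb : b ∈ Icc t tf) :
    IntervalIntegrable (fun τ => G τ (p.x τ) (p.u τ)) volume a b :=
  ((integrableOn_comp_path hG p.x_cont p.u_meas hU p.u_mem).mono_set
    (uIcc_subset_Icc ha hb)).intervalIntegrable

theorem fracRunningCost_add_adjacent (hU : IsCompact U) (hv : ∀ j, 0 < v j)
    (hg : ∀ j, Continuous ↿(g j)) (p : AdmissiblePair tf U ftil t x0) {a b c : ℝ}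
    (ha : a ∈ Icc t tf) (hb : b ∈ Icc t tf) (hc : c ∈ Icc t tf) :
    fracRunningCost tf v g p.x p.u a b + fracRunningCost tf v g p.x p.u b c
      = fracRunningCost tf v g p.x p.u a c := by
  have hint : ∀ j, ∀ a ∈ Icc t tf, ∀ b ∈ Icc t tf, IntervalIntegrable
      (fun τ => (tf - τ) ^ (v j - 1) * g j τ (p.x τ) (p.u τ)) volume a b := fun j a ha b hb =>
    ((integrableOn_sub_rpow_mul_comp_path (hg j) p.x_cont p.u_meas hU p.u_mem
      (by linarith [hv j]) tf).mono_set (uIcc_subset_Icc ha hb)).intervalIntegrable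
  exact _root_.fracRunningCost_add_adjacent (fun j => hint j a ha b hb)
    (fun j => hint j b hb c hc)

def restrictFrom
    (hftil : Continuous ↿ftil) (hU : IsCompact U)
    (p : AdmissiblePair tf U ftil t x0) {s : ℝ} (hs : s ∈ Icc t tf) :
    AdmissiblePair tf U ftil s (p.x s) where
  x := p.x
  u := p.u
  u_mem τ hτ := p.u_mem τ ⟨hs.1.trans hτ.1, hτ.2⟩
  u_meas := p.u_meas.comp (measurable_inclusion (Icc_subset_Icc_left hs.1))
  x_cont := p.x_cont.mono (Icc_subset_Icc_left hs.1)
  x_eq τ hτ := by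
    have hτ' : τ ∈ Icc t tf := ⟨hs.1.trans hτ.1, hτ.2⟩
    rw [p.x_eq τ hτ', p.x_eq s hs, add_assoc, intervalIntegral.integral_add_adjacent_intervals
      (p.intervalIntegrable_comp hftil hU (left_mem_Icc.2 (hs.1.trans hs.2)) hs)
      (p.intervalIntegrable_comp hftil hU hs hτ')]

@[simp]
theorem restrictFrom_u
    (hftil : Continuous ↿ftil) (hU : IsCompact U)
    (p : AdmissiblePair tf U ftil t x0) {s : ℝ} (hs : s ∈ Icc t tf) :
    (p.restrictFrom hftil hU hs).u = p.u := rfl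

theorem fracCost_restrictFrom
    (hftil : Continuous ↿ftil) (hU : IsCompact U) (hv : ∀ j, 0 < v j) (hg : ∀ j, Continuous ↿(g j))
    (p : AdmissiblePair tf U ftil t x0) {s : ℝ} (hs : s ∈ Icc t tf) :
    fracCost tf v g h p
      = fracRunningCost tf v g p.x p.u t s + fracCost tf v g h (p.restrictFrom hftil hU hs) := by
  rw [fracCost_eq_fracRunningCost_add, fracCost_eq_fracRunningCost_add, ← add_assoc]
  congr 1
  exact (p.fracRunningCost_add_adjacent hU hv hg (left_mem_Icc.2 (hs.1.trans hs.2)) hs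
    (right_mem_Icc.2 (hs.1.trans hs.2))).symm

theorem x_eq_concatAt
    (hftil : Continuous ↿ftil) (hU : IsCompact U)
    (p : AdmissiblePair tf U ftil t x0) {s : ℝ} (hs : s ∈ Icc t tf)
    (q : AdmissiblePair tf U ftil s (p.x s)) (τ : ℝ) (hτ : τ ∈ Icc t tf) :
    concatAt s p.x q.x τ
      = x0 + ∫ σ in t..τ, ftil σ (concatAt s p.x q.x σ) (concatAt s p.u q.u σ) := by
  set F := fun σ => ftil σ (concatAt s p.x q.x σ) (concatAt s p.u q.u σ)
  have hqs : p.x s = q.x s := (q.x_start hs.2).symm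
  have hFp : EqOn F (fun σ => ftil σ (p.x σ) (p.u σ)) (Iio s) := fun σ hσ => by
    simp only [F, concatAt_eqOn_Iio hσ]
  have hFq : EqOn F (fun σ => ftil σ (q.x σ) (q.u σ)) (Ici s) := fun σ hσ => by
    simp only [F, concatAt_eqOn_Ici hσ]
  have hleft : ∀ b ∈ Icc t s, EqOn F (fun σ => ftil σ (p.x σ) (p.u σ)) (uIoo t b) :=
    fun b hb => hFp.mono <| (uIoo_of_le hb.1).symm ▸ Ioo_subset_Iio_self.trans (Iio_subset_Iio hb.2)
  rcases le_or_gt τ s with hτs | hsτ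
  · rw [concatAt_eqOn_Iic hqs hτs, p.x_eq τ ⟨hτ.1, hτs.trans hs.2⟩,
      intervalIntegral.integral_congr_uIoo (hleft τ ⟨hτ.1, hτs⟩)]
  · have hsτ' : τ ∈ Icc s tf := ⟨hsτ.le, hτ.2⟩
    have hright : EqOn F (fun σ => ftil σ (q.x σ) (q.u σ)) (uIoo s τ) :=
      hFq.mono ((uIoo_of_le hsτ.le).symm ▸ Ioo_subset_Ioi_self.trans Ioi_subset_Ici_self)
    have hmid := hleft s ⟨hs.1, le_rfl⟩
    rw [concatAt_eqOn_Ici (mem_Ici.2 hsτ.le), q.x_eq τ hsτ',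
      ← intervalIntegral.integral_add_adjacent_intervals
        ((p.intervalIntegrable_comp hftil hU (left_mem_Icc.2 (hs.1.trans hs.2)) hs).congr_uIoo
          hmid.symm)
        ((q.intervalIntegrable_comp hftil hU (left_mem_Icc.2 hs.2) hsτ').congr_uIoo hright.symm),
      intervalIntegral.integral_congr_uIoo hmid, intervalIntegral.integral_congr_uIoo hright,
      ← add_assoc, ← p.x_eq s hs]

def concat
    (hftil : Continuous ↿ftil) (hU : IsCompact U)
    (p : AdmissiblePair tf U ftil t x0) {s : ℝ} (hs : s ∈ Icc t tf)
    (q : AdmissiblePair tf U ftil s (p.x s)) : AdmissiblePair tf U ftil t x0 where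
  x := concatAt s p.x q.x
  u := concatAt s p.u q.u
  u_mem := concatAt_mem hs.2 p.u_mem q.u_mem
  u_meas := measurable_domRestrict_concatAt hs.2 p.u_meas q.u_meas
  x_cont := continuousOn_concatAt hs.1 hs.2 (p.x_cont.mono (Icc_subset_Icc_right hs.2)) q.x_cont
    (q.x_start hs.2).symm
  x_eq := p.x_eq_concatAt hftil hU hs q

theorem fracCost_concat
    (hftil : Continuous ↿ftil) (hU : IsCompact U) (hv : ∀ j, 0 < v j) (hg : ∀ j, Continuous ↿(g j))
    (p : AdmissiblePair tf U ftil t x0) {s : ℝ} (hs : s ∈ Icc t tf)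
    (q : AdmissiblePair tf U ftil s (p.x s)) :
    fracCost tf v g h (p.concat hftil hU hs q)
      = fracRunningCost tf v g p.x p.u t s + fracCost tf v g h q := by
  set c := p.concat hftil hU hs q
  have hcx : c.x = concatAt s p.x q.x := rfl
  have hcu : c.u = concatAt s p.u q.u := rfl
  have hts : uIoo t s ⊆ Iio s := (uIoo_of_le hs.1).symm ▸ Ioo_subset_Iio_self
  have hstf : uIoo s tf ⊆ Ici s :=
    (uIoo_of_le hs.2).symm ▸ Ioo_subset_Ioi_self.trans Ioi_subset_Ici_self
  rw [fracCost_eq_fracRunningCost_add, fracCost_eq_fracRunningCost_add,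
    ← c.fracRunningCost_add_adjacent hU hv hg
      (left_mem_Icc.2 (hs.1.trans hs.2)) hs (right_mem_Icc.2 (hs.1.trans hs.2)), hcx, hcu,
    fracRunningCost_congr (concatAt_eqOn_Iio.mono hts) (concatAt_eqOn_Iio.mono hts),
    fracRunningCost_congr (concatAt_eqOn_Ici.mono hstf) (concatAt_eqOn_Ici.mono hstf), add_assoc,
    concatAt_eqOn_Ici (mem_Ici.2 hs.2)]

theorem le_fracRunningCost_add_value
    (hftil : Continuous ↿ftil) (hU : IsCompact U) (hv : ∀ j, 0 < v j) (hg : ∀ j, Continuous ↿(g j))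
    {V : ℝ → EuclideanSpace ℝ (Fin n) → ℝ} (hVt : (V t x0 : EReal) = fracValue tf U ftil v g h t x0)
    (p : AdmissiblePair tf U ftil t x0) {s : ℝ} (hs : s ∈ Icc t tf)
    (hVs : (V s (p.x s) : EReal) = fracValue tf U ftil v g h s (p.x s)) :
    V t x0 ≤ fracRunningCost tf v g p.x p.u t s + V s (p.x s) := by
  have hcost : ∀ q : AdmissiblePair tf U ftil s (p.x s),
      ((V t x0 - fracRunningCost tf v g p.x p.u t s : ℝ) : EReal) ≤ fracCost tf v g h q := by
    intro q
    have hconcat : (V t x0 : EReal) ≤ fracCost tf v g h (p.concat hftil hU hs q) :=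
      hVt ▸ iInf_le _ (p.concat hftil hU hs q)
    rw [p.fracCost_concat hftil hU hv hg hs q] at hconcat
    exact EReal.coe_le_coe_iff.2 (by linarith [EReal.coe_le_coe_iff.1 hconcat])
  have hvalue : ((V t x0 - fracRunningCost tf v g p.x p.u t s : ℝ) : EReal) ≤ V s (p.x s) := by
    rw [hVs]
    exact le_iInf hcost
  linarith [EReal.coe_le_coe_iff.1 hvalue]

theorem value_eq_fracCost_restrictFrom
    (hftil : Continuous ↿ftil) (hU : IsCompact U) (hv : ∀ j, 0 < v j) (hg : ∀ j, Continuous ↿(g j))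
    {V : ℝ → EuclideanSpace ℝ (Fin n) → ℝ} (hVt : (V t x0 : EReal) = fracValue tf U ftil v g h t x0)
    (p : AdmissiblePair tf U ftil t x0) (hopt : fracCost tf v g h p = V t x0)
    {s : ℝ} (hs : s ∈ Icc t tf)
    (hVs : (V s (p.x s) : EReal) = fracValue tf U ftil v g h s (p.x s)) :
    V s (p.x s) = fracCost tf v g h (p.restrictFrom hftil hU hs) := by
  refine le_antisymm (EReal.coe_le_coe_iff.1 (hVs ▸ iInf_le _ _)) ?_
  have hdpp := p.le_fracRunningCost_add_value hftil hU hv hg hVt hs hVs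
  linarith [p.fracCost_restrictFrom hftil hU hv hg (h := h) hs]

theorem fracRunningCost_add_value_eq
    (hftil : Continuous ↿ftil) (hU : IsCompact U) (hv : ∀ j, 0 < v j) (hg : ∀ j, Continuous ↿(g j))
    {t0 : ℝ} {V : ℝ → EuclideanSpace ℝ (Fin n) → ℝ}
    (hV : ∀ s ∈ Icc t0 tf, ∀ y, (V s y : EReal) = fracValue tf U ftil v g h s y)
    (p : AdmissiblePair tf U ftil t0 x0) (hopt : fracCost tf v g h p = V t0 x0)
    {t s : ℝ} (ht : t ∈ Icc t0 tf) (hs : s ∈ Icc t tf) :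
    fracRunningCost tf v g p.x p.u t s + V s (p.x s) = V t (p.x t) := by
  have hs' : s ∈ Icc t0 tf := ⟨ht.1.trans hs.1, hs.2⟩
  have hV0 := hV t0 (left_mem_Icc.2 (ht.1.trans ht.2)) x0
  rw [p.value_eq_fracCost_restrictFrom hftil hU hv hg hV0 hopt hs' (hV s hs' _),
    p.value_eq_fracCost_restrictFrom hftil hU hv hg hV0 hopt ht (hV t ht _)]
  exact ((p.restrictFrom hftil hU ht).fracCost_restrictFrom hftil hU hv hg hs).symm

theorem hasDerivWithinAt_x
    (hftil : Continuous ↿ftil) (hU : IsCompact U)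
    (p : AdmissiblePair tf U ftil t x0) (htf : t < tf) (hu : ContinuousWithinAt p.u (Ici t) t) :
    HasDerivWithinAt p.x (ftil t (p.x t) (p.u t)) (Ici t) t :=
  (((hasDerivWithinAt_integral_Ici htf (integrableOn_comp_path hftil p.x_cont p.u_meas hU p.u_mem)
    (continuousWithinAt_comp_path hftil htf p.x_cont hu)).const_add x0).mono Icc_subset_Ici_self
    |>.congr_of_mem p.x_eq (left_mem_Icc.2 htf.le)).mono_of_mem_nhdsWithin (Icc_mem_nhdsGE htf)

open RealInnerProductSpace in
theorem hasDerivWithinAt_fracRunningCost_add_value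
    (hftil : Continuous ↿ftil) (hU : IsCompact U) (hv : ∀ j, 0 < v j) (hg : ∀ j, Continuous ↿(g j))
    (p : AdmissiblePair tf U ftil t x0) (htf : t < tf) (hu : ContinuousWithinAt p.u (Ici t) t)
    {V : ℝ → EuclideanSpace ℝ (Fin n) → ℝ}
    (hV : DifferentiableAt ℝ (fun q : ℝ × EuclideanSpace ℝ (Fin n) => V q.1 q.2) (t, x0)) :
    HasDerivWithinAt (fun s => fracRunningCost tf v g p.x p.u t s + V s (p.x s))
      (fracLagrangian tf v g t x0 (p.u t)
        + (deriv (fun s => V s x0) t + ⟪gradient (V t) x0, ftil t x0 (p.u t)⟫)) (Ici t) t := by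
  have hx0 := p.x_start htf.le
  have hrun := hasDerivWithinAt_fracRunningCost hU hv hg htf p.x_cont p.u_meas p.u_mem hu
  have hval := hasDerivWithinAt_comp_graph (hx0 ▸ hV) (p.hasDerivWithinAt_x hftil hU htf hu)
  rw [hx0] at hrun hval
  exact hrun.add hval

end AdmissiblePair

open RealInnerProductSpace in
theorem fracHJB_equation_general
    (t0 tf : ℝ) (n m : ℕ)
    (U : Set (EuclideanSpace ℝ (Fin m))) (hUc : IsCompact U)
    (ftil : ℝ → EuclideanSpace ℝ (Fin n) → EuclideanSpace ℝ (Fin m) →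
      EuclideanSpace ℝ (Fin n))
    (hftil : Continuous fun p : ℝ × EuclideanSpace ℝ (Fin n) × EuclideanSpace ℝ (Fin m) =>
      ftil p.1 p.2.1 p.2.2)
    (r : ℕ) (v : Fin r → ℝ) (hv : ∀ j, 0 < v j)
    (g : Fin r → ℝ → EuclideanSpace ℝ (Fin n) → EuclideanSpace ℝ (Fin m) → ℝ)
    (hg : ∀ j, Continuous fun p : ℝ × EuclideanSpace ℝ (Fin n) × EuclideanSpace ℝ (Fin m) =>
      g j p.1 p.2.1 p.2.2)
    (h : EuclideanSpace ℝ (Fin n) → ℝ)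
    (V : ℝ → EuclideanSpace ℝ (Fin n) → ℝ)
    (hV : ∀ s ∈ Set.Icc t0 tf, ∀ y, ((V s y : ℝ) : EReal) = fracValue tf U ftil v g h s y)
    (x0 : EuclideanSpace ℝ (Fin n)) (pstar : AdmissiblePair tf U ftil t0 x0)
    (hopt : fracCost tf v g h pstar = V t0 x0)
    (t : ℝ) (ht : t ∈ Set.Ico t0 tf)
    (hVdiff : DifferentiableAt ℝ (fun p : ℝ × EuclideanSpace ℝ (Fin n) => V p.1 p.2)
      (t, pstar.x t))
    (hu_rc : ContinuousWithinAt pstar.u (Set.Ici t) t)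
    (hreach : ∀ ω ∈ U, ∃ p : AdmissiblePair tf U ftil t (pstar.x t),
      ContinuousWithinAt p.u (Set.Ici t) t ∧ p.u t = ω) :
    IsLeast
      ((fun ω : EuclideanSpace ℝ (Fin m) =>
          (∑ j, (1 / Real.Gamma (v j)) * (tf - t) ^ (v j - 1) * g j t (pstar.x t) ω)
            + ⟪gradient (fun y => V t y) (pstar.x t), ftil t (pstar.x t) ω⟫) '' U)
      (-(deriv (fun s => V s (pstar.x t)) t))
    ∧ ((fracCost tf v g h pstar : ℝ) : EReal) = fracValue tf U ftil v g h t0 x0 := by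
  have htf : t < tf := ht.2
  have ht' : t ∈ Icc t0 tf := Ico_subset_Icc_self ht
  have hderiv := fun (p : AdmissiblePair tf U ftil t (pstar.x t)) hp =>
    p.hasDerivWithinAt_fracRunningCost_add_value hftil hUc hv hg htf hp hVdiff
  refine ⟨⟨⟨pstar.u t, pstar.u_mem t ht', ?_⟩, ?_⟩, hopt ▸ hV t0 ⟨le_rfl, ht'.1.trans ht'.2⟩ x0⟩
  · have hconst {s : ℝ} (hs : s ∈ Icc t tf) :=
      pstar.fracRunningCost_add_value_eq hftil hUc hv hg hV hopt ht' hs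
    have hzero := (hderiv (pstar.restrictFrom hftil hUc ht') hu_rc).eq_zero_of_forall_eq htf
      fun s hs => (hconst hs).trans (hconst (left_mem_Icc.2 htf.le)).symm
    simp only [fracLagrangian, AdmissiblePair.restrictFrom_u] at hzero
    dsimp only
    linarith
  · rintro _ ⟨ω, hω, rfl⟩
    obtain ⟨p, hp, rfl⟩ := hreach ω hω
    have hnonneg := (hderiv p hp).nonneg_of_forall_le htf fun s hs => by
      rw [fracRunningCost_self, zero_add, p.x_start htf.le]
      exact p.le_fracRunningCost_add_value hftil hUc hv hg (hV t ht' _) (Ioc_subset_Icc_self hs)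
        (hV s ⟨ht'.1.trans hs.1.le, hs.2⟩ _)
    simp only [fracLagrangian] at hnonneg
    dsimp only
    linarith

open RealInnerProductSpace in
/-- **Fractional Hamilton–Jacobi–Bellman equation.** Assume the value function is
real-valued (equal to `V`) on `[t₀, t_f] × ℝⁿ`, and let `(x*, u*)` be an optimal
admissible pair from `(t₀, x₀)`, i.e. `J(t₀, x₀; x*, u*) = V(t₀, x₀)`. Let
`t ∈ [t₀, t_f)` be such that `V` is differentiable at `(t, x*(t))`, `u*` is
right-continuous at `t`, and every `ω ∈ U` is attained at time `t` by the control
of some admissible pair from `(t, x*(t))` right-continuous at `t`. Then `V`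
satisfies the fractional HJB equation at `(t, x*(t))`:
`-∂V/∂t (t, x*(t)) = min_{ω ∈ U} { Σ_j (1/Γ(v_j)) (t_f - t)^(v_j-1) g_j(t, x*(t), ω)
  + ⟨∇ₓV(t, x*(t)), f̃(t, x*(t), ω)⟩ }` (the minimum being attained), and moreover
the optimal cost of the system is `J* = V(t₀, x₀)`. -/
theorem fracHJB_equation
    (t0 tf : ℝ) (ht0f : t0 < tf) (n m : ℕ)
    (U : Set (EuclideanSpace ℝ (Fin m))) (hUc : IsCompact U) (hUne : U.Nonempty)
    (ftil : ℝ → EuclideanSpace ℝ (Fin n) → EuclideanSpace ℝ (Fin m) →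
      EuclideanSpace ℝ (Fin n))
    (hftil : Continuous fun p : ℝ × EuclideanSpace ℝ (Fin n) × EuclideanSpace ℝ (Fin m) =>
      ftil p.1 p.2.1 p.2.2)
    (r : ℕ) (hr : 1 ≤ r) (v : Fin r → ℝ) (hv : ∀ j, 0 < v j)
    (g : Fin r → ℝ → EuclideanSpace ℝ (Fin n) → EuclideanSpace ℝ (Fin m) → ℝ)
    (hg : ∀ j, Continuous fun p : ℝ × EuclideanSpace ℝ (Fin n) × EuclideanSpace ℝ (Fin m) =>
      g j p.1 p.2.1 p.2.2)
    (h : EuclideanSpace ℝ (Fin n) → ℝ) (hh : Continuous h)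
    (V : ℝ → EuclideanSpace ℝ (Fin n) → ℝ)
    (hV : ∀ s ∈ Set.Icc t0 tf, ∀ y, ((V s y : ℝ) : EReal) = fracValue tf U ftil v g h s y)
    (x0 : EuclideanSpace ℝ (Fin n)) (pstar : AdmissiblePair tf U ftil t0 x0)
    (hopt : fracCost tf v g h pstar = V t0 x0)
    (t : ℝ) (ht : t ∈ Set.Ico t0 tf)
    (hVdiff : DifferentiableAt ℝ (fun p : ℝ × EuclideanSpace ℝ (Fin n) => V p.1 p.2)
      (t, pstar.x t))
    (hu_rc : ContinuousWithinAt pstar.u (Set.Ici t) t)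
    (hreach : ∀ ω ∈ U, ∃ p : AdmissiblePair tf U ftil t (pstar.x t),
      ContinuousWithinAt p.u (Set.Ici t) t ∧ p.u t = ω) :
    IsLeast
      ((fun ω : EuclideanSpace ℝ (Fin m) =>
          (∑ j, (1 / Real.Gamma (v j)) * (tf - t) ^ (v j - 1) * g j t (pstar.x t) ω)
            + ⟪gradient (fun y => V t y) (pstar.x t), ftil t (pstar.x t) ω⟫) '' U)
      (-(deriv (fun s => V s (pstar.x t)) t))
    ∧ ((fracCost tf v g h pstar : ℝ) : EReal) = fracValue tf U ftil v g h t0 x0 :=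
  fracHJB_equation_general t0 tf n m U hUc ftil hftil r v hv g hg h V hV x0 pstar hopt t ht hVdiff
    hu_rc hreach
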